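/- For every compactly supported smooth function φ : ℝ → ℝ, the pairing of the measure χ♭(R,·) with φ, namely G(R) := (1/2)·e^{R/2}·(φ(R) + φ(−R)) + ∫_{|u|<|R|} g(R,u)·φ(u) du, satisfies lim_{R→0} G(R) = φ(0), and G is differentiable at R = 0 with G′(0) = 0; that is, χ♭ attains the initial data χ♭|_{R=0} = δ_{u=0} and χ♭_R|_{R=0} = 0. -/

import Mathlib

open MeasureTheory Filter

/-- The power series `f(y) = ∑ (−1)^n yⁿ / (16ⁿ (n!)²)`. -/
noncomputable def f (y : ℝ) : ℝ :=
  ∑' n : ℕ, (-1 : ℝ) ^ n * y ^ n / (16 ^ n * (Nat.factorial n : ℝ) ^ 2)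

/-- coefficients -/
noncomputable def fc (n : ℕ) : ℝ := (-1) ^ n / (16 ^ n * (Nat.factorial n : ℝ) ^ 2)

lemma fc_abs_le (n : ℕ) : |fc n| ≤ 1 / (Nat.factorial n : ℝ) := by
  have h1 : (1:ℝ) ≤ 16 ^ n := one_le_pow₀ (by norm_num)
  have h2 : (1:ℝ) ≤ (Nat.factorial n : ℝ) := by exact_mod_cast Nat.one_le_iff_ne_zero.2 (Nat.factorial_ne_zero n)
  have hf : (0:ℝ) < (Nat.factorial n : ℝ) := by positivity
  rw [fc, abs_div, abs_pow, abs_neg, abs_one, one_pow]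
  rw [abs_of_pos (by positivity)]
  rw [div_le_div_iff₀ (by positivity) hf]
  have : (Nat.factorial n : ℝ) * (Nat.factorial n : ℝ) * 1 ≤ 16 ^ n * (Nat.factorial n : ℝ)^2 := by
    nlinarith
  nlinarith

noncomputable def fp : FormalMultilinearSeries ℝ ℝ ℝ := FormalMultilinearSeries.ofScalars ℝ fc

lemma fp_radius : fp.radius = ⊤ := by
  refine FormalMultilinearSeries.radius_eq_top_of_summable_norm _ fun r ↦ ?_
  refine Summable.of_nonneg_of_le (fun n => by positivity) (fun n => ?_)
    (Real.summable_pow_div_factorial r)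
  rw [fp, FormalMultilinearSeries.ofScalars_norm]
  calc ‖fc n‖ * (r:ℝ)^n ≤ (1 / (Nat.factorial n : ℝ)) * (r:ℝ)^n := by
        apply mul_le_mul_of_nonneg_right (fc_abs_le n) (by positivity)
    _ = (r:ℝ)^n / (Nat.factorial n : ℝ) := by ring

lemma f_hasSum (y : ℝ) : HasSum (fun n => fp n fun _ => y) (f y) := by
  have he : (fun n => fp n fun _ => y)
      = fun n : ℕ => (-1 : ℝ) ^ n * y ^ n / (16 ^ n * (Nat.factorial n : ℝ) ^ 2) := by
    funext n
    rw [fp, FormalMultilinearSeries.ofScalars_apply_eq, fc, smul_eq_mul]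
    ring
  rw [he, f]
  apply Summable.hasSum
  refine Summable.of_norm (Summable.of_nonneg_of_le (fun n => by positivity) (fun n => ?_)
    (Real.summable_pow_div_factorial |y|))
  have h1 : (1:ℝ) ≤ 16 ^ n := one_le_pow₀ (by norm_num)
  have h2 : (1:ℝ) ≤ (Nat.factorial n : ℝ) := by exact_mod_cast Nat.one_le_iff_ne_zero.2 (Nat.factorial_ne_zero n)
  have hD : (0:ℝ) < 16 ^ n * (Nat.factorial n : ℝ) ^ 2 := by positivity
  have hnorm : ‖(-1 : ℝ) ^ n * y ^ n / (16 ^ n * (Nat.factorial n : ℝ) ^ 2)‖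
      = |y| ^ n / (16 ^ n * (Nat.factorial n : ℝ) ^ 2) := by
    rw [Real.norm_eq_abs, abs_div, abs_mul, abs_pow, abs_pow, abs_neg, abs_one, one_pow,
      one_mul, abs_of_pos hD]
  rw [hnorm]
  apply div_le_div_of_nonneg_left (by positivity) (by positivity)
  nlinarith

lemma f_fpsb : HasFPowerSeriesOnBall f fp 0 ⊤ :=
  ⟨by rw [fp_radius], by simp, fun {y} _ => by simpa using f_hasSum y⟩

lemma f_analytic : AnalyticOnNhd ℝ f Set.univ := fun x _ =>
  f_fpsb.analyticAt_of_mem (by simp)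

lemma f_cont : Continuous f :=
  continuous_iff_continuousAt.2 fun x => (f_analytic x trivial).continuousAt

lemma df_cont : Continuous (deriv f) :=
  continuous_iff_continuousAt.2 fun x => ((f_analytic.deriv) x trivial).continuousAt

lemma f_zero : f 0 = 1 := by
  rw [f, tsum_eq_single 0 (fun n hn => by simp [zero_pow hn])]
  simp

/-- The absolutely continuous part of the isothermal kernel `χ♭`:
`g(R,u) = −(1/2)·sgn(R)·e^{R/2}·((1/2)·f(u² − R²) + 2R·f′(u² − R²))` for `|u| < |R|`,
and `0` otherwise. -/
noncomputable def g (R u : ℝ) : ℝ :=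
  if |u| < |R| then
    -(1 / 2) * Real.sign R * Real.exp (R / 2) *
      ((1 / 2) * f (u ^ 2 - R ^ 2) + 2 * R * deriv f (u ^ 2 - R ^ 2))
  else 0

/-- The pairing of the measure `χ♭(R,·)` with a test function `φ`. -/
noncomputable def G (φ : ℝ → ℝ) (R : ℝ) : ℝ :=
  (1 / 2) * Real.exp (R / 2) * (φ R + φ (-R)) + ∫ u in Set.Ioo (-|R|) |R|, g R u * φ u

noncomputable def k (R u : ℝ) : ℝ :=
  -(1 / 2) * Real.exp (R / 2) *
      ((1 / 2) * f (u ^ 2 - R ^ 2) + 2 * R * deriv f (u ^ 2 - R ^ 2))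

lemma k_cont : Continuous (fun p : ℝ × ℝ => k p.1 p.2) := by
  have hf := f_cont
  have hdf := df_cont
  unfold k
  fun_prop

theorem stmt7 (φ : ℝ → ℝ) (hφ : ContDiff ℝ (⊤ : ℕ∞) φ) (hsupp : HasCompactSupport φ) :
    Tendsto (G φ) (nhds 0) (nhds (φ 0)) ∧ HasDerivAt (G φ) 0 0 := by
  have hφc : Continuous φ := hφ.continuous
  have hG0 : G φ 0 = φ 0 := by
    simp [G, Real.exp_zero]
    ring
  suffices h : HasDerivAt (G φ) 0 0 by
    exact ⟨hG0 ▸ h.continuousAt.tendsto, h⟩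
  have hφd := hφ.differentiable (by simp)
  -- boundary part
  have hA : HasDerivAt (fun R => (1 / 2) * Real.exp (R / 2) * (φ R + φ (-R))) (φ 0 / 2) 0 := by
    have h1 : HasDerivAt (fun R : ℝ => Real.exp (R / 2)) (1 / 2) 0 := by
      have := ((hasDerivAt_id (0 : ℝ)).div_const 2).exp
      simpa using this
    have h2 : HasDerivAt (fun R : ℝ => φ R + φ (-R)) 0 0 := by
      have ha := (hφd 0).hasDerivAt
      have hb : HasDerivAt (fun R : ℝ => φ (-R)) (-deriv φ 0) 0 := by
        have := ((hφd (-0 : ℝ)).hasDerivAt.comp 0 (hasDerivAt_neg 0))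
        simpa [Function.comp_def] using this
      exact (ha.add hb).congr_deriv (by simp)
    have h3 := (h1.const_mul (1 / 2 : ℝ)).mul h2
    refine h3.congr_deriv ?_
    simp [Real.exp_zero]
    ring
  -- integral part
  have hI : HasDerivAt (fun R => ∫ u in Set.Ioo (-|R|) |R|, g R u * φ u) (-(φ 0 / 2)) 0 := by
    rw [hasDerivAt_iff_isLittleO]
    have hI0 : (∫ u in Set.Ioo (-|(0 : ℝ)|) |(0 : ℝ)|, g 0 u * φ u) = 0 := by simp
    rw [Asymptotics.isLittleO_iff]
    intro c hc
    set h : ℝ × ℝ → ℝ := fun p => k p.1 p.2 * φ p.2 + φ 0 / 4 with hh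
    have hhcont : Continuous h := (k_cont.mul (hφc.comp continuous_snd)).add continuous_const
    have hh0 : h (0, 0) = 0 := by
      simp [hh, k, f_zero, Real.exp_zero]
      ring
    have hcc := hhcont.continuousAt (x := ((0 : ℝ), (0 : ℝ)))
    rw [Metric.continuousAt_iff] at hcc
    obtain ⟨δ, hδ, hball⟩ := hcc (c / 2) (by linarith)
    have hev : ∀ᶠ R in nhds (0 : ℝ), |R| < δ := by
      filter_upwards [Metric.ball_mem_nhds (0 : ℝ) hδ] with R hR
      simpa [Real.dist_eq] using hR
    filter_upwards [hev] with R hRδ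
    rcases eq_or_ne R 0 with rfl | hR0
    · simp
    -- pointwise bound on h
    have hbd : ∀ u ∈ Set.Ioo (-|R|) |R|, ‖h (R, u)‖ ≤ c / 2 := by
      intro u hu
      have hu' : |u| < |R| := abs_lt.2 ⟨hu.1, hu.2⟩
      have hdist : dist ((R, u) : ℝ × ℝ) (0, 0) < δ := by
        rw [Prod.dist_eq]
        simp only [Real.dist_eq, sub_zero]
        exact max_lt hRδ (hu'.trans hRδ)
      have := hball hdist
      rw [hh0, Real.dist_eq, sub_zero] at this
      exact this.le
    -- rewrite the integral
    have hIoofin : volume (Set.Ioo (-|R|) |R|) < ⊤ := measure_Ioo_lt_top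
    have hvol : (volume (Set.Ioo (-|R|) |R|)).toReal = 2 * |R| := by
      rw [Real.volume_Ioo, ENNReal.toReal_ofReal (by linarith [abs_nonneg R])]
      ring
    have hkint : IntegrableOn (fun u => k R u * φ u) (Set.Ioo (-|R|) |R|) := by
      have : Continuous (fun u => k R u * φ u) :=
        (k_cont.comp (continuous_const.prodMk continuous_id)).mul hφc
      exact (this.integrableOn_Icc).mono_set Set.Ioo_subset_Icc_self
    have hgk : Set.EqOn (fun u => g R u * φ u) (fun u => Real.sign R * (k R u * φ u))
        (Set.Ioo (-|R|) |R|) := by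
      intro u hu
      have hu' : |u| < |R| := abs_lt.2 ⟨hu.1, hu.2⟩
      simp only [g, if_pos hu', k]
      ring
    have hIR : (∫ u in Set.Ioo (-|R|) |R|, g R u * φ u)
        = Real.sign R * ∫ u in Set.Ioo (-|R|) |R|, k R u * φ u := by
      rw [setIntegral_congr_fun measurableSet_Ioo hgk, integral_const_mul]
    have hsign : Real.sign R * |R| = R := by
      rcases lt_or_gt_of_ne hR0 with h | h
      · rw [Real.sign_of_neg h, abs_of_neg h]; ring
      · rw [Real.sign_of_pos h, abs_of_pos h]; ring
    have habs_sign : |Real.sign R| = 1 := by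
      rcases lt_or_gt_of_ne hR0 with h | h
      · rw [Real.sign_of_neg h]; norm_num
      · rw [Real.sign_of_pos h]; norm_num
    have hconst : (∫ _ in Set.Ioo (-|R|) |R|, (φ 0 / 4)) = |R| * (φ 0 / 2) := by
      rw [setIntegral_const, measureReal_def, hvol, smul_eq_mul]
      ring
    have hsplit : (∫ u in Set.Ioo (-|R|) |R|, h (R, u))
        = (∫ u in Set.Ioo (-|R|) |R|, k R u * φ u) + |R| * (φ 0 / 2) := by
      rw [← hconst]
      exact integral_add hkint (integrableOn_const hIoofin.ne)
    have hkey : (∫ u in Set.Ioo (-|R|) |R|, g R u * φ u)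
          - (∫ u in Set.Ioo (-|(0:ℝ)|) |(0:ℝ)|, g 0 u * φ u) - (R - 0) • (-(φ 0 / 2))
        = Real.sign R * ∫ u in Set.Ioo (-|R|) |R|, h (R, u) := by
      rw [hI0, hIR, hsplit, smul_eq_mul]
      have hexp : Real.sign R * ((∫ u in Set.Ioo (-|R|) |R|, k R u * φ u) + |R| * (φ 0 / 2))
          = Real.sign R * (∫ u in Set.Ioo (-|R|) |R|, k R u * φ u)
            + (Real.sign R * |R|) * (φ 0 / 2) := by ring
      rw [hexp, hsign]
      ring
    calc ‖(∫ u in Set.Ioo (-|R|) |R|, g R u * φ u)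
          - (∫ u in Set.Ioo (-|(0:ℝ)|) |(0:ℝ)|, g 0 u * φ u) - (R - 0) • (-(φ 0 / 2))‖
        = ‖Real.sign R‖ * ‖∫ u in Set.Ioo (-|R|) |R|, h (R, u)‖ := by rw [hkey, norm_mul]
      _ = ‖∫ u in Set.Ioo (-|R|) |R|, h (R, u)‖ := by
          rw [Real.norm_eq_abs, habs_sign, one_mul]
      _ ≤ (c / 2) * (volume (Set.Ioo (-|R|) |R|)).toReal :=
          norm_setIntegral_le_of_norm_le_const hIoofin hbd
      _ = c * ‖R - 0‖ := by rw [hvol, sub_zero, Real.norm_eq_abs]; ring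
  have hsum := hA.add hI
  have hres : HasDerivAt (fun R => (1 / 2) * Real.exp (R / 2) * (φ R + φ (-R))
      + ∫ u in Set.Ioo (-|R|) |R|, g R u * φ u) 0 0 := by
    refine hsum.congr_deriv ?_
    ring
  exact hres
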